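/- arXiv:1808.02100 — 4 statements merged into one kernel-verified Lean document; each statement's English description precedes it below -/
import Mathlib

section
/- For the semicircular distribution (μ with density √(4-x²)/(2π) on [-2,2]) and the signed measure μ' = (1/2)((δ_{-2}+δ_2)/2 - arcsine law), the Cauchy transform of μ' equals G(z)/(z²-4), where G is the Cauchy transform of μ, for all z in the upper half-plane. -/
/-!
The semicircle density is `(4 - t²)/2` times the arcsine density. Writing
`(4 - t²)/(z - t) = (z + t) - (z² - 4)/(z - t)` and using that the arcsine law has mass `1` and
mean `0` gives `G(z) = z/2 - (z² - 4)/2 · G_arcsine(z)`, which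
rearranges to the claim since `(1/(z + 2) + 1/(z - 2))/2 = z/(z² - 4)`.
-/

open Complex
open Real intervalIntegral MeasureTheory Set

theorem intervalIntegral.integral_eq_zero_of_odd {E : Type*} [NormedAddCommGroup E]
    [NormedSpace ℝ E] {f : ℝ → E} (hf : f.Odd) (a : ℝ) :
    ∫ x in -a..a, f x = 0 := by
  have h := integral_comp_neg (a := -a) (b := a) f
  simp only [hf _, integral_neg, neg_neg] at h
  rw [neg_eq_iff_add_eq_zero, ← two_smul ℝ, smul_eq_zero] at h
  exact h.resolve_left two_ne_zero

lemma hasDerivAt_arcsin_div {r x : ℝ} (hx : x ∈ Ioo (-r) r) :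
    HasDerivAt (fun y => arcsin (y / r)) (√(r ^ 2 - x ^ 2))⁻¹ x := by
  obtain ⟨hlo, hhi⟩ := hx
  have hr : 0 < r := by linarith
  have hsq : r ^ 2 - x ^ 2 = r ^ 2 * (1 - (x / r) ^ 2) := by field_simp
  have hlo' : -1 < x / r := by rw [lt_div_iff₀ hr]; linarith
  have hhi' : x / r < 1 := by rw [div_lt_iff₀ hr]; linarith
  refine ((hasDerivAt_arcsin hlo'.ne' hhi'.ne).comp x
    ((hasDerivAt_id x).div_const r)).congr_deriv ?_
  rw [hsq, sqrt_mul (by positivity), sqrt_sq hr.le]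
  simp [mul_comm]

lemma intervalIntegrable_inv_sqrt_sq_sub_sq {r : ℝ} (hr : 0 ≤ r) :
    IntervalIntegrable (fun x => (√(r ^ 2 - x ^ 2))⁻¹) volume (-r) r :=
  (intervalIntegrable_iff_integrableOn_Ioc_of_le (by linarith)).2 <|
    integrableOn_deriv_of_nonneg (by fun_prop) (fun _ hx => hasDerivAt_arcsin_div hx)
      (fun _ _ => by positivity)

lemma integral_inv_sqrt_sq_sub_sq {r : ℝ} (hr : 0 < r) :
    ∫ x in -r..r, (√(r ^ 2 - x ^ 2))⁻¹ = π := by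
  rw [integral_eq_sub_of_hasDerivAt_of_le (by linarith) (by fun_prop)
    (fun _ hx => hasDerivAt_arcsin_div hx) (intervalIntegrable_inv_sqrt_sq_sub_sq hr.le)]
  simp [hr.ne', arcsin_neg]

lemma IntervalIntegrable.ofReal {f : ℝ → ℝ} {μ : Measure ℝ} {a b : ℝ}
    (hf : IntervalIntegrable f μ a b) : IntervalIntegrable (fun x => (f x : ℂ)) μ a b :=
  ⟨hf.1.ofReal, hf.2.ofReal⟩

lemma Complex.sub_ofReal_ne_zero {z : ℂ} (hz : z.im ≠ 0) (t : ℝ) : z - t ≠ 0 :=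
  fun h => hz (by simpa using congrArg im h)

-- By the junk values `√x = 0` for `x < 0` and `1 / 0 = 0`, both densities vanish off `(-2, 2)`.
noncomputable def arcsineDensity (t : ℝ) : ℝ := 1 / (π * √(4 - t ^ 2))

noncomputable def semicircleDensity (t : ℝ) : ℝ := √(4 - t ^ 2) / (2 * π)

lemma arcsineDensity_eq (t : ℝ) : arcsineDensity t = π⁻¹ * (√(2 ^ 2 - t ^ 2))⁻¹ := by
  rw [arcsineDensity, one_div, mul_inv]
  norm_num

lemma intervalIntegrable_arcsineDensity : IntervalIntegrable arcsineDensity volume (-2) 2 := by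
  rw [funext arcsineDensity_eq]
  exact (intervalIntegrable_inv_sqrt_sq_sub_sq zero_le_two).const_mul π⁻¹

lemma integral_arcsineDensity : ∫ t in (-2 : ℝ)..2, arcsineDensity t = 1 := by
  rw [funext arcsineDensity_eq, intervalIntegral.integral_const_mul,
    integral_inv_sqrt_sq_sub_sq two_pos]
  exact inv_mul_cancel₀ pi_ne_zero

lemma integral_mul_arcsineDensity : ∫ t in (-2 : ℝ)..2, t * arcsineDensity t = 0 :=
  integral_eq_zero_of_odd (fun t => by simp [arcsineDensity]) 2

lemma integral_add_mul_arcsineDensity (z : ℂ) :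
    ∫ t in (-2 : ℝ)..2, (z + t) * (arcsineDensity t : ℂ) = z := by
  have hw : IntervalIntegrable (fun t => (arcsineDensity t : ℂ)) volume (-2) 2 :=
    intervalIntegrable_arcsineDensity.ofReal
  have htw : IntervalIntegrable (fun t => ((t * arcsineDensity t : ℝ) : ℂ)) volume (-2) 2 :=
    (intervalIntegrable_arcsineDensity.continuousOn_mul continuousOn_id).ofReal
  simp only [add_mul, ← ofReal_mul]
  rw [integral_add (hw.const_mul z) htw, intervalIntegral.integral_const_mul, integral_ofReal,
    integral_ofReal, integral_arcsineDensity, integral_mul_arcsineDensity]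
  simp

lemma semicircleDensity_eq (t : ℝ) :
    semicircleDensity t = (4 - t ^ 2) / 2 * arcsineDensity t := by
  rcases le_or_gt (4 - t ^ 2) 0 with h | h
  · simp [semicircleDensity, arcsineDensity, sqrt_eq_zero'.mpr h]
  · have hs := sq_sqrt h.le
    have := sqrt_pos.2 h
    rw [semicircleDensity, arcsineDensity]
    field_simp
    rw [hs]

lemma inv_sub_mul_semicircleDensity {z : ℂ} {t : ℝ} (h : z - t ≠ 0) :
    (z - t)⁻¹ * (semicircleDensity t : ℂ) =
      ((z + t) * arcsineDensity t - (z ^ 2 - 4) * ((z - t)⁻¹ * arcsineDensity t)) / 2 := by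
  rw [semicircleDensity_eq]
  push_cast
  field_simp
  ring

lemma integral_inv_sub_mul_semicircleDensity {z : ℂ} (hz : z.im ≠ 0) :
    ∫ t in (-2 : ℝ)..2, (z - t)⁻¹ * (semicircleDensity t : ℂ) =
      z / 2 - (z ^ 2 - 4) / 2 * ∫ t in (-2 : ℝ)..2, (z - t)⁻¹ * (arcsineDensity t : ℂ) := by
  have hw : IntervalIntegrable (fun t => (arcsineDensity t : ℂ)) volume (-2) 2 :=
    intervalIntegrable_arcsineDensity.ofReal
  have hcont : Continuous fun t : ℝ => (z - t)⁻¹ :=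
    (continuous_const.sub continuous_ofReal).inv₀ (sub_ofReal_ne_zero hz)
  rw [integral_congr fun t _ => inv_sub_mul_semicircleDensity (sub_ofReal_ne_zero hz t),
    intervalIntegral.integral_div, integral_sub (hw.continuousOn_mul (by fun_prop))
      ((hw.continuousOn_mul hcont.continuousOn).const_mul _),
    intervalIntegral.integral_const_mul, integral_add_mul_arcsineDensity]
  ring

/-- The Cauchy transform of `μ' = (1/2)((δ_{-2}+δ_2)/2 - arcsine law)` equals
`G(z)/(z²-4)` on the upper half-plane, where `G` is the Cauchy transform of the
semicircle law. -/
theorem stmt_11 :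
    ∀ z : ℂ, 0 < z.im →
      (1 / 2 : ℂ) * ((((z - (-2))⁻¹ + (z - 2)⁻¹) / 2)
          - ∫ t in (-2 : ℝ)..2, (z - (t : ℂ))⁻¹ *
              ((1 / (Real.pi * Real.sqrt (4 - t ^ 2)) : ℝ) : ℂ))
        = (∫ t in (-2 : ℝ)..2, (z - (t : ℂ))⁻¹ *
              ((Real.sqrt (4 - t ^ 2) / (2 * Real.pi) : ℝ) : ℂ)) / (z ^ 2 - 4) := by
  intro z hz
  have hG := integral_inv_sub_mul_semicircleDensity hz.ne'
  simp only [semicircleDensity, arcsineDensity] at hG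
  have hplus : z + 2 ≠ 0 := by simpa using sub_ofReal_ne_zero hz.ne' (-2)
  have hminus : z - 2 ≠ 0 := by simpa using sub_ofReal_ne_zero hz.ne' 2
  have hsq : z ^ 2 - 4 ≠ 0 := by
    rw [show z ^ 2 - 4 = (z + 2) * (z - 2) by ring]
    exact mul_ne_zero hplus hminus
  rw [hG, sub_neg_eq_add]
  field_simp
  ring
end

section
/- For any c > 0, setting a = (1-√c)² and b = (1+√c)², we have ∫_a^b xⁿ · √((b-x)(x-a))/(2πx) dx = ∑_{π ∈ NC(n)} c^{#(π)} for every n ≥ 1, where #(π) is the number of blocks of π (with an additional atom of mass 1-c at 0 when c < 1 contributing nothing to positive moments). -/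
/-- `P` is a partition of `Fin n` into nonempty blocks. -/
def IsPartition {n : ℕ} (P : Finset (Finset (Fin n))) : Prop :=
  (∀ B ∈ P, B.Nonempty) ∧ ∀ x : Fin n, ∃! B, B ∈ P ∧ x ∈ B

/-- `P` is non-crossing. -/
def IsNonCrossing {n : ℕ} (P : Finset (Finset (Fin n))) : Prop :=
  ∀ B₁ ∈ P, ∀ B₂ ∈ P, ∀ a ∈ B₁, ∀ b ∈ B₂, ∀ c ∈ B₁, ∀ d ∈ B₂,
    a < b → b < c → c < d → B₁ = B₂

open Classical in
/-- The set of non-crossing partitions of `[n]`, as a `Finset`. -/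
noncomputable def NC (n : ℕ) : Finset (Finset (Finset (Fin n))) :=
  Finset.univ.filter fun P => IsPartition P ∧ IsNonCrossing P

/-!
The substitution `x = 1 + c + 2√c t` turns the `n`-th moment into `c` times the semicircle
moment `(2 / π) ∫_{-1}^{1} (1 + c + 2√c t)^(n-1) √(1 - t²) dt`. Expanding binomially, only the
even powers survive, and `∫ t^(2m) √(1 - t²) dt = (π / 2) Cat(m) / 4^m` (Wallis) gives
`c T_{n-1}(c, 1 + c)`, where `T_k(x, y) = ∑_m C(k, 2m) Cat(m) x^m y^(k-2m)` is the weighted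
Motzkin polynomial. Pascal's rule, a Vandermonde-type identity and the Catalan convolution give its
first-return recursion `T_{k+1} = y T_k + x ∑_{i<k} T_i T_{k-1-i}`, so `m_{k+1} = c T_k(c, 1 + c)`
satisfies `m_{k+1} = c m_k + ∑_{i<k} m_{i+1} m_{k-1-i}` with `m_0 = 1`.

The block-weighted count `∑_{π ∈ NC(s)} c^#π` satisfies the same recursion, by looking at the
largest point `M` of `s`: either `{M}` is a block, or, `j` being the largest other point of the
block of `M`, non-crossing forces every other block to lie below `j` or strictly between `j` and
`M`, and the partition splits into a non-crossing partition of the points `≤ j` (the block of `M`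
losing `M`) and one of the points strictly between `j` and `M`.
-/

open Finset

theorem sum_range_choose_mul_choose_sub (N p q : ℕ) :
    ∑ i ∈ range (N + 1), i.choose p * (N - i).choose q = (N + 1).choose (p + q + 1) := by
  induction N generalizing p with
  | zero =>
    rcases p with _ | p <;> rcases q with _ | q <;> simp [Nat.choose_eq_zero_of_lt]
  | succ N ih =>
    rw [sum_range_succ']
    simp only [Nat.add_sub_add_right]
    cases p with
    | zero =>
      have := ih 0
      simp only [Nat.choose_zero_right, one_mul] at this ⊢
      rw [this, Nat.sub_zero, zero_add, Nat.choose_succ_succ' (N + 1) q, add_comm]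
    | succ p =>
      simp only [Nat.choose_succ_succ' _ p, add_mul, sum_add_distrib, ih, Nat.choose_zero_succ,
        zero_mul, add_zero]
      rw [show p + 1 + q + 1 = p + q + 1 + 1 by ring, Nat.choose_succ_succ' (N + 1) (p + q + 1)]

theorem sum_range_mul_sum_range_mul_add {R : Type*} [CommSemiring R] (N : ℕ) (a b h : ℕ → R)
    (hh : ∀ k, N ≤ k → h k = 0) :
    ∑ m ∈ range N, ∑ l ∈ range N, a m * b l * h (m + l) =
      ∑ k ∈ range N, (∑ i ∈ range (k + 1), a i * b (k - i)) * h k := by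
  have hdiag := sum_range_diag_flip N fun m l => a m * b l * h (m + l)
  simp only [sum_mul]
  rw [show ∑ k ∈ range N, ∑ i ∈ range (k + 1), a i * b (k - i) * h k =
      ∑ k ∈ range N, ∑ i ∈ range (k + 1), a i * b (k - i) * h (i + (k - i)) from
    sum_congr rfl fun k _ => sum_congr rfl fun i hi => by
      rw [Nat.add_sub_cancel' (Nat.lt_succ_iff.mp (mem_range.mp hi))], hdiag]
  refine sum_congr rfl fun m hm => (sum_subset (range_subset_range.mpr (Nat.sub_le N m)) ?_).symm
  intro l _ hl
  rw [hh _ (by simp only [mem_range] at hm hl; omega), mul_zero]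

theorem sum_range_two_mul {M : Type*} [AddCommMonoid M] (f : ℕ → M) (n : ℕ) :
    ∑ j ∈ range (2 * n), f j = ∑ m ∈ range n, (f (2 * m) + f (2 * m + 1)) := by
  induction n with
  | zero => simp
  | succ n ih =>
    rw [mul_add, mul_one, sum_range_succ, sum_range_succ, sum_range_succ, ih, add_assoc]

theorem sum_range_catalan_mul_catalan {R : Type*} [CommSemiring R] (k : ℕ) :
    ∑ i ∈ range (k + 1), (catalan i : R) * catalan (k - i) = catalan (k + 1) := by
  rw [catalan_succ, ← Fin.sum_univ_eq_sum_range (fun i => (catalan i : R) * catalan (k - i))]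
  push_cast
  rfl

section Motzkin

variable {K : Type*} [Field K]

/-- Integer exponents: the terms with `2m > n` vanish through the binomial coefficient, and
`zpow_add₀` applies without side conditions; `motzkinPoly_eq_sum_pow` has natural exponents. -/
def motzkinPoly (x y : K) (n : ℕ) : K :=
  ∑ m ∈ range (n + 1), (n.choose (2 * m) : K) * catalan m * x ^ m * y ^ ((n : ℤ) - 2 * m)

theorem motzkinPoly_eq_sum_range_of_lt (x y : K) {n N : ℕ} (h : n < N) :
    motzkinPoly x y n =
      ∑ m ∈ range N, (n.choose (2 * m) : K) * catalan m * x ^ m * y ^ ((n : ℤ) - 2 * m) := by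
  refine sum_subset (range_subset_range.mpr h) fun m _ hm => ?_
  rw [Nat.choose_eq_zero_of_lt (by simp only [mem_range] at hm; omega)]
  simp

theorem motzkinPoly_eq_sum_pow (x y : K) (n : ℕ) :
    motzkinPoly x y n =
      ∑ m ∈ range (n + 1), (n.choose (2 * m) : K) * catalan m * x ^ m * y ^ (n - 2 * m) := by
  refine sum_congr rfl fun m _ => ?_
  rcases le_or_gt (2 * m) n with h | h
  · rw [← zpow_natCast y, Nat.cast_sub h]
    push_cast
    rfl
  · simp [Nat.choose_eq_zero_of_lt h]

theorem motzkinPoly_succ_sub (x : K) {y : K} (hy : y ≠ 0) (n : ℕ) :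
    motzkinPoly x y (n + 1) - y * motzkinPoly x y n =
      x * ∑ m ∈ range (n + 1),
        (n.choose (2 * m + 1) : K) * catalan (m + 1) * x ^ m * y ^ ((n : ℤ) - 1 - 2 * m) := by
  rw [motzkinPoly, motzkinPoly_eq_sum_range_of_lt x y (by omega : n < n + 1 + 1), mul_sum,
    ← sum_sub_distrib, sum_range_succ', mul_sum]
  have hzpow : ∀ m : ℕ, y * y ^ ((n : ℤ) - 2 * m) = y ^ (((n + 1 : ℕ) : ℤ) - 2 * m) := fun m => by
    rw [← zpow_one_add₀ hy]; push_cast; ring_nf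
  simp only [mul_left_comm y, hzpow, mul_zero, Nat.choose_zero_right, sub_self, add_zero]
  refine sum_congr rfl fun m _ => ?_
  rw [show 2 * (m + 1) = 2 * m + 1 + 1 by ring, Nat.choose_succ_succ']
  push_cast
  ring_nf

theorem motzkinPoly_mul_motzkinPoly_sub (x : K) {y : K} (hy : y ≠ 0) {i N : ℕ} (hiN : i ≤ N) :
    motzkinPoly x y i * motzkinPoly x y (N - i) =
      ∑ m ∈ range (N + 1), ∑ l ∈ range (N + 1),
        ((i.choose (2 * m) * (N - i).choose (2 * l) : ℕ) : K) *
          (catalan m * catalan l * x ^ (m + l) * y ^ ((N : ℤ) - 2 * (m + l))) := by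
  rw [motzkinPoly_eq_sum_range_of_lt x y (Nat.lt_succ_of_le hiN),
    motzkinPoly_eq_sum_range_of_lt x y (Nat.lt_succ_of_le (Nat.sub_le N i)), sum_mul_sum]
  refine sum_congr rfl fun m _ => sum_congr rfl fun l _ => ?_
  have hzpow : y ^ ((i : ℤ) - 2 * m) * y ^ (((N - i : ℕ) : ℤ) - 2 * l) =
      y ^ ((N : ℤ) - 2 * (m + l)) := by
    rw [← zpow_add₀ hy, Nat.cast_sub hiN]; ring_nf
  rw [← hzpow]
  push_cast
  ring

theorem sum_motzkinPoly_mul_motzkinPoly (x : K) {y : K} (hy : y ≠ 0) (n : ℕ) :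
    ∑ i ∈ range n, motzkinPoly x y i * motzkinPoly x y (n - 1 - i) =
      ∑ m ∈ range (n + 1),
        (n.choose (2 * m + 1) : K) * catalan (m + 1) * x ^ m * y ^ ((n : ℤ) - 1 - 2 * m) := by
  rcases n with _ | N
  · simp
  set h : ℕ → K := fun k => ((N + 1).choose (2 * k + 1) : K) * x ^ k * y ^ ((N : ℤ) - 2 * k)
  have hh : ∀ k, N + 1 ≤ k → h k = 0 := fun k hk => by
    simp only [h, Nat.choose_eq_zero_of_lt (by omega : N + 1 < 2 * k + 1), Nat.cast_zero, zero_mul]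
  rw [Nat.add_sub_cancel, sum_congr rfl fun i hi =>
      motzkinPoly_mul_motzkinPoly_sub x hy (Nat.lt_succ_iff.mp (mem_range.mp hi)), sum_comm,
    sum_congr rfl fun m _ => sum_comm]
  simp_rw [← sum_mul, ← Nat.cast_sum, sum_range_choose_mul_choose_sub]
  have hterm : ∀ m l, ((N + 1).choose (2 * m + 2 * l + 1) : K) *
      (catalan m * catalan l * x ^ (m + l) * y ^ ((N : ℤ) - 2 * (m + l))) =
        catalan m * catalan l * h (m + l) := fun m l => by
    simp only [h, show 2 * m + 2 * l + 1 = 2 * (m + l) + 1 by ring]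
    push_cast
    ring
  simp_rw [hterm]
  rw [sum_range_mul_sum_range_mul_add _ _ _ _ hh, sum_range_succ _ (N + 1),
    Nat.choose_eq_zero_of_lt (by omega : N + 1 < 2 * (N + 1) + 1)]
  simp only [Nat.cast_zero, zero_mul, add_zero, sum_range_catalan_mul_catalan, h]
  refine sum_congr rfl fun k _ => ?_
  push_cast
  ring_nf

theorem motzkinPoly_succ (x : K) {y : K} (hy : y ≠ 0) (n : ℕ) :
    motzkinPoly x y (n + 1) = y * motzkinPoly x y n +
      x * ∑ i ∈ range n, motzkinPoly x y i * motzkinPoly x y (n - 1 - i) := by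
  rw [sum_motzkinPoly_mul_motzkinPoly x hy, ← motzkinPoly_succ_sub x hy]
  ring

end Motzkin

section FreePoisson

variable {R : Type*} [CommSemiring R]

/-- The sum over `Fin n` makes the recursive calls visibly smaller. -/
def freePoissonMoment (c : R) : ℕ → R
  | 0 => 1
  | n + 1 => c * freePoissonMoment c n +
      ∑ i : Fin n, freePoissonMoment c (i + 1) * freePoissonMoment c (n - (i + 1))

theorem freePoissonMoment_succ (c : R) (n : ℕ) :
    freePoissonMoment c (n + 1) = c * freePoissonMoment c n +
      ∑ i ∈ range n, freePoissonMoment c (i + 1) * freePoissonMoment c (n - (i + 1)) := by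
  rw [freePoissonMoment, Fin.sum_univ_eq_sum_range
    (fun i => freePoissonMoment c (i + 1) * freePoissonMoment c (n - (i + 1)))]

theorem freePoissonMoment_succ_eq_motzkinPoly {K : Type*} [Field K] {c : K} (hc : 1 + c ≠ 0)
    (n : ℕ) : freePoissonMoment c (n + 1) = c * motzkinPoly c (1 + c) n := by
  induction n using Nat.strong_induction_on with
  | _ n ih =>
  rcases n with _ | n
  · rw [freePoissonMoment_succ]; simp [freePoissonMoment.eq_1, motzkinPoly]
  have hsum : ∑ i ∈ range n, freePoissonMoment c (i + 1) * freePoissonMoment c (n + 1 - (i + 1)) =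
      c * (c * ∑ i ∈ range n, motzkinPoly c (1 + c) i * motzkinPoly c (1 + c) (n - 1 - i)) := by
    rw [mul_sum, mul_sum]
    refine sum_congr rfl fun i hi => ?_
    have hi : i < n := mem_range.mp hi
    rw [show n + 1 - (i + 1) = n - 1 - i + 1 by omega, ih i (by omega), ih _ (by omega)]
    ring
  rw [freePoissonMoment_succ, sum_range_succ, hsum, Nat.sub_self, ih n n.lt_succ_self,
    motzkinPoly_succ c hc, freePoissonMoment]
  ring

end FreePoisson

section Semicircle

open Real intervalIntegral

theorem integral_sin_pow_even_centered (m : ℕ) :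
    ∫ θ in -(π / 2)..π / 2, sin θ ^ (2 * m) = π * m.centralBinom / 4 ^ m := by
  induction m with
  | zero => simp
  | succ m ih =>
    have h := Nat.succ_mul_centralBinom_succ m
    rw [show 2 * (m + 1) = 2 * m + 2 by ring, integral_sin_pow, ih, cos_neg, cos_pi_div_two]
    rw [← Nat.cast_inj (R := ℝ)] at h
    push_cast at h ⊢
    simp only [mul_zero, sub_zero, zero_div, zero_add, pow_succ]
    field_simp
    linear_combination (-2) * h

theorem integral_sin_pow_odd_centered (m : ℕ) :
    ∫ θ in -(π / 2)..π / 2, sin θ ^ (2 * m + 1) = 0 := by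
  induction m with
  | zero => simp
  | succ m ih =>
    rw [show 2 * (m + 1) + 1 = 2 * m + 1 + 2 by ring, integral_sin_pow, ih, cos_neg, cos_pi_div_two]
    simp

theorem integral_pow_mul_sqrt_one_sub_sq (j : ℕ) :
    ∫ t in (-1 : ℝ)..1, t ^ j * √(1 - t ^ 2) = (∫ θ in -(π / 2)..π / 2, sin θ ^ j) / (j + 2) := by
  have hf : Continuous fun t : ℝ => t ^ j * √(1 - t ^ 2) := by fun_prop
  calc ∫ t in (-1 : ℝ)..1, t ^ j * √(1 - t ^ 2)
      = ∫ θ in -(π / 2)..π / 2, ((fun t : ℝ => t ^ j * √(1 - t ^ 2)) ∘ sin) θ * cos θ := by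
        rw [integral_comp_mul_deriv (fun θ _ => hasDerivAt_sin θ) continuousOn_cos hf, sin_neg,
          sin_pi_div_two]
    _ = ∫ θ in -(π / 2)..π / 2, (sin θ ^ j - sin θ ^ (j + 2)) := by
        refine integral_congr fun θ hθ => ?_
        rw [Set.uIcc_of_le (by linarith [pi_pos]), Set.mem_Icc] at hθ
        rw [Function.comp_apply, ← cos_eq_sqrt_one_sub_sin_sq hθ.1 hθ.2, mul_assoc, ← sq,
          cos_sq']
        ring
    _ = _ := by
        rw [integral_sub (f := fun θ => sin θ ^ j) (g := fun θ => sin θ ^ (j + 2))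
          ((continuous_sin.pow _).intervalIntegrable _ _)
          ((continuous_sin.pow _).intervalIntegrable _ _), integral_sin_pow, cos_neg,
          cos_pi_div_two]
        field_simp
        ring

theorem integral_pow_even_mul_sqrt_one_sub_sq (m : ℕ) :
    ∫ t in (-1 : ℝ)..1, t ^ (2 * m) * √(1 - t ^ 2) = π / 2 * catalan m / 4 ^ m := by
  rw [integral_pow_mul_sqrt_one_sub_sq, integral_sin_pow_even_centered,
    ← succ_mul_catalan_eq_centralBinom]
  push_cast
  field_simp

theorem integral_pow_odd_mul_sqrt_one_sub_sq (m : ℕ) :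
    ∫ t in (-1 : ℝ)..1, t ^ (2 * m + 1) * √(1 - t ^ 2) = 0 := by
  rw [integral_pow_mul_sqrt_one_sub_sq, integral_sin_pow_odd_centered, zero_div]

theorem integral_add_mul_pow_mul_sqrt_one_sub_sq (u v : ℝ) (n : ℕ) :
    ∫ t in (-1 : ℝ)..1, (u + v * t) ^ n * √(1 - t ^ 2) = π / 2 * motzkinPoly (v ^ 2 / 4) u n := by
  set g : ℕ → ℝ := fun j =>
    v ^ j * u ^ (n - j) * n.choose j * ∫ t in (-1 : ℝ)..1, t ^ j * √(1 - t ^ 2)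
  have hexpand : ∫ t in (-1 : ℝ)..1, (u + v * t) ^ n * √(1 - t ^ 2) = ∑ j ∈ range (n + 1), g j := by
    simp_rw [add_comm u, add_pow, sum_mul]
    rw [integral_finsetSum fun j _ => by apply Continuous.intervalIntegrable; fun_prop]
    refine sum_congr rfl fun j _ => ?_
    rw [show g j = ∫ t in (-1 : ℝ)..1, (v ^ j * u ^ (n - j) * n.choose j) * (t ^ j * √(1 - t ^ 2))
      from (integral_const_mul _ _).symm]
    refine integral_congr fun t _ => ?_
    ring
  have hg : ∑ j ∈ range (n + 1), g j = ∑ j ∈ range (2 * (n + 1)), g j :=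
    sum_subset (range_subset_range.mpr (by omega)) fun j _ hj => by
      simp [g, Nat.choose_eq_zero_of_lt (show n < j by simp only [mem_range] at hj; omega)]
  rw [hexpand, hg, sum_range_two_mul, motzkinPoly_eq_sum_pow, mul_sum]
  refine sum_congr rfl fun m _ => ?_
  simp only [g, integral_pow_even_mul_sqrt_one_sub_sq, integral_pow_odd_mul_sqrt_one_sub_sq]
  rw [div_pow, ← pow_mul]
  ring

theorem integral_pow_mul_sqrt_sub_mul_sub (u : ℝ) {v : ℝ} (hv : 0 ≤ v) (n : ℕ) :
    ∫ x in u - v..u + v, x ^ n * √((u + v - x) * (x - (u - v))) =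
      π / 2 * v ^ 2 * motzkinPoly (v ^ 2 / 4) u n := by
  have hsubst : ∀ t, (u + v * t) ^ n * √((u + v - (u + v * t)) * (u + v * t - (u - v))) =
      v * ((u + v * t) ^ n * √(1 - t ^ 2)) := fun t => by
    rw [show (u + v - (u + v * t)) * (u + v * t - (u - v)) = v ^ 2 * (1 - t ^ 2) by ring,
      sqrt_mul (sq_nonneg v), sqrt_sq hv]
    ring
  have := smul_integral_comp_add_mul (a := -1) (b := 1)
    (fun x => x ^ n * √((u + v - x) * (x - (u - v)))) v u
  rw [show u + v * -1 = u - v by ring, mul_one] at this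
  rw [← this, smul_eq_mul]
  simp only [hsubst, integral_const_mul, integral_add_mul_pow_mul_sqrt_one_sub_sq]
  ring

theorem integral_marchenkoPastur_moment {c : ℝ} (hc : 0 ≤ c) (n : ℕ) :
    ∫ x in (1 - √c) ^ 2..(1 + √c) ^ 2,
        x ^ (n + 1) * √(((1 + √c) ^ 2 - x) * (x - (1 - √c) ^ 2)) / (2 * π * x) =
      c * motzkinPoly c (1 + c) n := by
  have hs2 : √c ^ 2 = c := sq_sqrt hc
  have hlo : (1 - √c) ^ 2 = 1 + c - 2 * √c := by linear_combination hs2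
  have hhi : (1 + √c) ^ 2 = 1 + c + 2 * √c := by linear_combination hs2
  have hcancel : ∀ᵐ x : ℝ, x ∈ Set.uIoc (1 + c - 2 * √c) (1 + c + 2 * √c) →
      x ^ (n + 1) * √((1 + c + 2 * √c - x) * (x - (1 + c - 2 * √c))) / (2 * π * x) =
        (2 * π)⁻¹ * (x ^ n * √((1 + c + 2 * √c - x) * (x - (1 + c - 2 * √c)))) := by
    filter_upwards [MeasureTheory.Measure.ae_ne MeasureTheory.volume 0] with x hx _
    field_simp
    ring
  rw [hlo, hhi, integral_congr_ae hcancel, integral_const_mul,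
    integral_pow_mul_sqrt_sub_mul_sub _ (by positivity), mul_pow, hs2,
    show (2 : ℝ) ^ 2 * c / 4 = c by ring]
  field_simp

end Semicircle

section NCPartition

variable {α : Type*} [LinearOrder α]

def NonCrossing (P : Finset (Finset α)) : Prop :=
  ∀ B₁ ∈ P, ∀ B₂ ∈ P, ∀ a ∈ B₁, ∀ b ∈ B₂, ∀ c ∈ B₁, ∀ d ∈ B₂, a < b → b < c → c < d → B₁ = B₂

structure IsNCPartition (s : Finset α) (P : Finset (Finset α)) : Prop where
  subset : ∀ B ∈ P, B ⊆ s
  nonempty : ∀ B ∈ P, B.Nonempty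
  exists_mem : ∀ x ∈ s, ∃ B ∈ P, x ∈ B
  eq_of_mem : ∀ {B₁ B₂ x}, B₁ ∈ P → B₂ ∈ P → x ∈ B₁ → x ∈ B₂ → B₁ = B₂
  nonCrossing : NonCrossing P

open Classical in
noncomputable def ncPartitions (s : Finset α) : Finset (Finset (Finset α)) :=
  s.powerset.powerset.filter (IsNCPartition s)

theorem mem_ncPartitions {s : Finset α} {P : Finset (Finset α)} :
    P ∈ ncPartitions s ↔ IsNCPartition s P := by
  classical
  rw [ncPartitions, mem_filter, mem_powerset, and_iff_right_iff_imp]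
  exact fun hP B hB => mem_powerset.mpr (hP.subset B hB)

theorem ncPartitions_empty : ncPartitions (∅ : Finset α) = {∅} := by
  ext P
  rw [mem_ncPartitions, mem_singleton]
  constructor
  · intro hP
    refine eq_empty_of_forall_notMem fun B hB => ?_
    obtain ⟨x, hx⟩ := hP.nonempty B hB
    exact notMem_empty x (hP.subset B hB hx)
  · rintro rfl
    exact ⟨by simp, by simp, by simp, by simp, by simp [NonCrossing]⟩

theorem isNCPartition_singleton (M : α) : IsNCPartition {M} {{M}} where
  subset := by simp
  nonempty := by simp
  exists_mem := by simp
  eq_of_mem h₁ h₂ _ _ := (mem_singleton.mp h₁).trans (mem_singleton.mp h₂).symm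
  nonCrossing B₁ h₁ B₂ h₂ _ _ _ _ _ _ _ _ _ _ _ :=
    (mem_singleton.mp h₁).trans (mem_singleton.mp h₂).symm

def insertIfMem (M j : α) (B : Finset α) : Finset α :=
  if j ∈ B then insert M B else B

theorem mem_insertIfMem {M j x : α} {B : Finset α} :
    x ∈ insertIfMem M j B ↔ x ∈ B ∨ j ∈ B ∧ x = M := by
  unfold insertIfMem
  split_ifs with h <;> simp [h, or_comm]

theorem mem_insertIfMem_of_notMem {M j x : α} {B : Finset α} (hMB : M ∉ B)
    (hx : x ∈ insertIfMem M j B) : x ∈ B ∧ x ≠ M ∨ j ∈ B ∧ x = M :=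
  (mem_insertIfMem.mp hx).imp_left fun hxB => ⟨hxB, fun h => hMB (h ▸ hxB)⟩

theorem erase_insertIfMem {M j : α} {B : Finset α} (hM : M ∉ B) :
    (insertIfMem M j B).erase M = B := by
  unfold insertIfMem
  split_ifs
  · exact erase_insert hM
  · exact erase_eq_of_notMem hM

def addToBlock (M j : α) (P : Finset (Finset α)) : Finset (Finset α) :=
  P.image (insertIfMem M j)

theorem insert_mem_addToBlock {P : Finset (Finset α)} {M j : α} {D : Finset α} (hD : D ∈ P)
    (hj : j ∈ D) : insert M D ∈ addToBlock M j P :=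
  mem_image.mpr ⟨D, hD, if_pos hj⟩

theorem addToBlock_eq_self {P : Finset (Finset α)} {M j : α} (hj : ∀ B ∈ P, j ∉ B) :
    addToBlock M j P = P :=
  (image_congr fun B hB => if_neg (hj B hB)).trans image_id'

theorem image_erase_addToBlock {P : Finset (Finset α)} {M j : α} (hM : ∀ B ∈ P, M ∉ B) :
    (addToBlock M j P).image (·.erase M) = P := by
  rw [addToBlock, image_image]
  exact (image_congr fun B hB => erase_insertIfMem (hM B hB)).trans image_id'

theorem card_addToBlock {P : Finset (Finset α)} {M j : α} (hM : ∀ B ∈ P, M ∉ B) :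
    (addToBlock M j P).card = P.card :=
  card_image_of_injOn fun B₁ hB₁ B₂ hB₂ h => by
    rw [← erase_insertIfMem (j := j) (hM B₁ hB₁), ← erase_insertIfMem (j := j) (hM B₂ hB₂)]
    exact congrArg (·.erase M) h

theorem disjoint_filter_le_filter_lt {t : Finset α} {j : α} :
    Disjoint (t.filter (· ≤ j)) (t.filter (j < ·)) :=
  disjoint_filter.mpr fun _ _ hxj hjx => (not_lt.mpr hxj) hjx

theorem disjoint_insert_filter_le_filter_lt {t : Finset α} {M j : α} (hM : ∀ x ∈ t, x < M) :
    Disjoint (insert M (t.filter (· ≤ j))) (t.filter (j < ·)) := by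
  refine disjoint_left.mpr fun x hx hx' => ?_
  obtain ⟨hxt, hjx⟩ := mem_filter.mp hx'
  rcases mem_insert.mp hx with rfl | hx
  · exact lt_irrefl x (hM x hxt)
  · exact lt_irrefl x ((mem_filter.mp hx).2.trans_lt hjx)

theorem addToBlock_union {P Q : Finset (Finset α)} {M j : α} :
    addToBlock M j (P ∪ Q) = addToBlock M j P ∪ addToBlock M j Q :=
  image_union _ _

def glue (M j : α) (Q R : Finset (Finset α)) : Finset (Finset α) :=
  addToBlock M j Q ∪ R

namespace IsNCPartition

variable {s t u : Finset α} {P Q R : Finset (Finset α)} {M j : α}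

theorem nonCrossing_addToBlock (hQ : IsNCPartition t Q) (hjmax : ∀ x ∈ t, x ≤ j) (hjM : j < M) :
    NonCrossing (_root_.addToBlock M j Q) := by
  have hmem : ∀ B ∈ Q, ∀ x ∈ insertIfMem M j B, x ∈ B ∧ x ≠ M ∨ j ∈ B ∧ x = M := fun B hB _ =>
    mem_insertIfMem_of_notMem fun h => (hjmax M (hQ.subset B hB h)).not_gt hjM
  intro C₁ h₁ C₂ h₂ a ha b hb c hc d hd hab hbc hcd
  obtain ⟨B₁, hB₁, rfl⟩ := mem_image.mp h₁
  obtain ⟨B₂, hB₂, rfl⟩ := mem_image.mp h₂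
  suffices B₁ = B₂ by rw [this]
  have hdM : d ≤ M := by
    rcases hmem B₂ hB₂ d hd with ⟨hdB, -⟩ | ⟨-, rfl⟩
    · exact (hjmax d (hQ.subset B₂ hB₂ hdB)).trans hjM.le
    · exact le_rfl
  have hbelow : ∀ B ∈ Q, ∀ y ∈ insertIfMem M j B, y < d → y ∈ B := fun B hB y hy hyd =>
    (hmem B hB y hy).elim (·.1) fun h => absurd h.2 (hyd.trans_le hdM).ne
  have haB := hbelow B₁ hB₁ a ha (hab.trans (hbc.trans hcd))
  have hbB := hbelow B₂ hB₂ b hb (hbc.trans hcd)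
  have hcB := hbelow B₁ hB₁ c hc hcd
  rcases hmem B₂ hB₂ d hd with ⟨hdB, -⟩ | ⟨hjB, rfl⟩
  · exact hQ.nonCrossing B₁ hB₁ B₂ hB₂ a haB b hbB c hcB d hdB hab hbc hcd
  rcases (hjmax c (hQ.subset B₁ hB₁ hcB)).lt_or_eq with hcj | rfl
  · exact hQ.nonCrossing B₁ hB₁ B₂ hB₂ a haB b hbB c hcB j hjB hab hbc hcj
  · exact hQ.eq_of_mem hB₁ hB₂ hcB hjB

theorem addToBlock (hQ : IsNCPartition t Q) (hj : j ∈ t) (hjmax : ∀ x ∈ t, x ≤ j) (hjM : j < M) :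
    IsNCPartition (insert M t) (_root_.addToBlock M j Q) := by
  have hmem : ∀ B ∈ Q, ∀ x ∈ insertIfMem M j B, x ∈ B ∧ x ≠ M ∨ j ∈ B ∧ x = M := fun B hB _ =>
    mem_insertIfMem_of_notMem fun h => (hjmax M (hQ.subset B hB h)).not_gt hjM
  refine ⟨?_, ?_, fun x hx => ?_, fun {C₁ C₂ x} h₁ h₂ hx₁ hx₂ => ?_,
    hQ.nonCrossing_addToBlock hjmax hjM⟩
  · simp only [_root_.addToBlock, forall_mem_image]
    intro B hB x hx
    rcases hmem B hB x hx with ⟨hxB, -⟩ | ⟨-, rfl⟩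
    · exact mem_insert_of_mem (hQ.subset B hB hxB)
    · exact mem_insert_self _ _
  · simp only [_root_.addToBlock, forall_mem_image]
    exact fun B hB => (hQ.nonempty B hB).mono fun x hx => mem_insertIfMem.mpr (Or.inl hx)
  · rcases mem_insert.mp hx with rfl | hx
    · obtain ⟨D, hD, hjD⟩ := hQ.exists_mem j hj
      exact ⟨_, insert_mem_addToBlock hD hjD, mem_insert_self _ _⟩
    · obtain ⟨B, hB, hxB⟩ := hQ.exists_mem x hx
      exact ⟨_, mem_image_of_mem _ hB, mem_insertIfMem.mpr (Or.inl hxB)⟩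
  · obtain ⟨B₁, hB₁, rfl⟩ := mem_image.mp h₁
    obtain ⟨B₂, hB₂, rfl⟩ := mem_image.mp h₂
    suffices B₁ = B₂ by rw [this]
    rcases hmem B₁ hB₁ x hx₁ with ⟨hx₁, hxM⟩ | ⟨hj₁, rfl⟩ <;>
      rcases hmem B₂ hB₂ x hx₂ with ⟨hx₂, hxM'⟩ | ⟨hj₂, hxM'⟩
    · exact hQ.eq_of_mem hB₁ hB₂ hx₁ hx₂
    · exact absurd hxM' hxM
    · exact absurd rfl hxM'
    · exact hQ.eq_of_mem hB₁ hB₂ hj₁ hj₂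

theorem addToBlock_image_erase (hP : IsNCPartition s P) {B : Finset α} (hB : B ∈ P) (hMB : M ∈ B)
    (hjB : j ∈ B) (hjM : j ≠ M) : _root_.addToBlock M j (P.image (·.erase M)) = P := by
  rw [_root_.addToBlock, image_image]
  refine (image_congr fun C hC => ?_).trans image_id'
  dsimp only [Function.comp_apply]
  by_cases hCB : C = B
  · subst hCB
    rw [insertIfMem, if_pos (mem_erase.mpr ⟨hjM, hjB⟩), insert_erase hMB]
  · have hMC : M ∉ C := fun h => hCB (hP.eq_of_mem hC hB h hMB)
    have hjC : j ∉ C := fun h => hCB (hP.eq_of_mem hC hB h hjB)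
    rw [erase_eq_of_notMem hMC, insertIfMem, if_neg hjC]


theorem of_subset (hP : IsNCPartition s P) (hQP : Q ⊆ P) (hsub : ∀ B ∈ Q, B ⊆ t)
    (hcover : ∀ x ∈ t, ∃ B ∈ Q, x ∈ B) : IsNCPartition t Q where
  subset := hsub
  nonempty B hB := hP.nonempty B (hQP hB)
  exists_mem := hcover
  eq_of_mem h₁ h₂ := hP.eq_of_mem (hQP h₁) (hQP h₂)
  nonCrossing B₁ h₁ B₂ h₂ := hP.nonCrossing B₁ (hQP h₁) B₂ (hQP h₂)

theorem restrict (hP : IsNCPartition s P) (ht : t ⊆ s) (hsplit : ∀ B ∈ P, B ⊆ t ∨ Disjoint B t) :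
    IsNCPartition t (P.filter (· ⊆ t)) :=
  hP.of_subset (filter_subset _ _) (fun B hB => (mem_filter.mp hB).2) fun x hx => by
    obtain ⟨B, hB, hxB⟩ := hP.exists_mem x (ht hx)
    refine ⟨B, mem_filter.mpr ⟨hB, (hsplit B hB).resolve_right fun h => ?_⟩, hxB⟩
    exact disjoint_left.mp h hxB hx

theorem erase_singleton (hP : IsNCPartition s P) (hM : {M} ∈ P) :
    IsNCPartition (s.erase M) (P.erase {M}) := by
  refine hP.of_subset (erase_subset _ _) (fun B hB y hy => ?_) fun x hx => ?_
  · obtain ⟨hBM, hB⟩ := mem_erase.mp hB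
    refine mem_erase.mpr ⟨fun hyM => hBM ?_, hP.subset B hB hy⟩
    exact hP.eq_of_mem hB hM (hyM ▸ hy) (mem_singleton_self M)
  · obtain ⟨hxM, hxs⟩ := mem_erase.mp hx
    obtain ⟨B, hB, hxB⟩ := hP.exists_mem x hxs
    refine ⟨B, mem_erase.mpr ⟨?_, hB⟩, hxB⟩
    rintro rfl
    exact hxM (mem_singleton.mp hxB)

theorem union (hQ : IsNCPartition t Q) (hR : IsNCPartition u R) (htu : Disjoint t u)
    (hgap : ∀ x ∈ t, ∀ y ∈ u, ∀ z ∈ u, y < x → x < z → False) :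
    IsNCPartition (t ∪ u) (Q ∪ R) where
  subset B hB := by
    rcases mem_union.mp hB with h | h
    · exact (hQ.subset B h).trans subset_union_left
    · exact (hR.subset B h).trans subset_union_right
  nonempty B hB := (mem_union.mp hB).elim (hQ.nonempty B) (hR.nonempty B)
  exists_mem x hx := by
    rcases mem_union.mp hx with h | h
    · obtain ⟨B, hB, hxB⟩ := hQ.exists_mem x h
      exact ⟨B, mem_union_left _ hB, hxB⟩
    · obtain ⟨B, hB, hxB⟩ := hR.exists_mem x h
      exact ⟨B, mem_union_right _ hB, hxB⟩
  eq_of_mem h₁ h₂ hx₁ hx₂ := by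
    rcases mem_union.mp h₁ with h₁ | h₁ <;> rcases mem_union.mp h₂ with h₂ | h₂
    · exact hQ.eq_of_mem h₁ h₂ hx₁ hx₂
    · exact (disjoint_left.mp htu (hQ.subset _ h₁ hx₁) (hR.subset _ h₂ hx₂)).elim
    · exact (disjoint_left.mp htu (hQ.subset _ h₂ hx₂) (hR.subset _ h₁ hx₁)).elim
    · exact hR.eq_of_mem h₁ h₂ hx₁ hx₂
  nonCrossing B₁ h₁ B₂ h₂ a ha b hb c hc d hd hab hbc hcd := by
    rcases mem_union.mp h₁ with h₁ | h₁ <;> rcases mem_union.mp h₂ with h₂ | h₂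
    · exact hQ.nonCrossing B₁ h₁ B₂ h₂ a ha b hb c hc d hd hab hbc hcd
    · exact (hgap c (hQ.subset _ h₁ hc) b (hR.subset _ h₂ hb) d (hR.subset _ h₂ hd) hbc hcd).elim
    · exact (hgap b (hQ.subset _ h₂ hb) a (hR.subset _ h₁ ha) c (hR.subset _ h₁ hc) hab hbc).elim
    · exact hR.nonCrossing B₁ h₁ B₂ h₂ a ha b hb c hc d hd hab hbc hcd

theorem insert_singleton (hQ : IsNCPartition t Q) (hM : M ∉ t) :
    IsNCPartition (insert M t) (insert {M} Q) := by
  rw [insert_eq, insert_eq, union_comm {M} t, union_comm _ Q]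
  refine hQ.union (isNCPartition_singleton M) (disjoint_singleton_right.mpr hM) ?_
  intro x _ y hy z hz hyx hxz
  rw [mem_singleton] at hy hz
  subst hy hz
  exact lt_asymm hyx hxz

theorem disjoint (hQ : IsNCPartition t Q) (hR : IsNCPartition u R) (htu : Disjoint t u) :
    Disjoint Q R :=
  disjoint_left.mpr fun B hBQ hBR => by
    obtain ⟨x, hx⟩ := hQ.nonempty B hBQ
    exact disjoint_left.mp htu (hQ.subset B hBQ hx) (hR.subset B hBR hx)

theorem filter_union_left (hQ : IsNCPartition t Q) (hR : IsNCPartition u R)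
    (htu : Disjoint t u) : (Q ∪ R).filter (· ⊆ t) = Q := by
  rw [filter_union, filter_true_of_mem hQ.subset, filter_false_of_mem, union_empty]
  intro B hB hBt
  obtain ⟨x, hx⟩ := hR.nonempty B hB
  exact disjoint_left.mp htu (hBt hx) (hR.subset B hB hx)

theorem filter_union_right (hQ : IsNCPartition t Q) (hR : IsNCPartition u R)
    (htu : Disjoint t u) : (Q ∪ R).filter (· ⊆ u) = R := by
  rw [union_comm]
  exact filter_union_left hR hQ htu.symm

theorem erase_nonempty (hP : IsNCPartition s P) (hM : {M} ∉ P) {B : Finset α} (hB : B ∈ P) :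
    (B.erase M).Nonempty := by
  rw [nonempty_iff_ne_empty, Ne, erase_eq_empty_iff, not_or]
  exact ⟨(hP.nonempty B hB).ne_empty, fun h => hM (h ▸ hB)⟩

theorem image_erase (hP : IsNCPartition s P) (hM : {M} ∉ P) :
    IsNCPartition (s.erase M) (P.image (·.erase M)) where
  subset C hC := by
    obtain ⟨B, hB, rfl⟩ := mem_image.mp hC
    exact erase_subset_erase M (hP.subset B hB)
  nonempty C hC := by
    obtain ⟨B, hB, rfl⟩ := mem_image.mp hC
    exact hP.erase_nonempty hM hB
  exists_mem x hx := by
    obtain ⟨B, hB, hxB⟩ := hP.exists_mem x (mem_of_mem_erase hx)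
    exact ⟨B.erase M, mem_image_of_mem _ hB, mem_erase.mpr ⟨ne_of_mem_erase hx, hxB⟩⟩
  eq_of_mem h₁ h₂ hx₁ hx₂ := by
    obtain ⟨B₁, hB₁, rfl⟩ := mem_image.mp h₁
    obtain ⟨B₂, hB₂, rfl⟩ := mem_image.mp h₂
    rw [hP.eq_of_mem hB₁ hB₂ (mem_of_mem_erase hx₁) (mem_of_mem_erase hx₂)]
  nonCrossing C₁ h₁ C₂ h₂ a ha b hb c hc d hd hab hbc hcd := by
    obtain ⟨B₁, hB₁, rfl⟩ := mem_image.mp h₁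
    obtain ⟨B₂, hB₂, rfl⟩ := mem_image.mp h₂
    rw [hP.nonCrossing B₁ hB₁ B₂ hB₂ a (mem_of_mem_erase ha) b (mem_of_mem_erase hb) c
      (mem_of_mem_erase hc) d (mem_of_mem_erase hd) hab hbc hcd]

theorem glue (hQ : IsNCPartition (t.filter (· ≤ j)) Q)
    (hR : IsNCPartition (t.filter (j < ·)) R) (hj : j ∈ t) (hM : ∀ x ∈ t, x < M) :
    IsNCPartition (insert M t) (_root_.glue M j Q R) := by
  have hset : insert M (t.filter (· ≤ j)) ∪ t.filter (j < ·) = insert M t := by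
    ext x
    simp only [mem_union, mem_insert, mem_filter]
    have := le_or_gt x j
    tauto
  rw [← hset, _root_.glue]
  refine (hQ.addToBlock (mem_filter.mpr ⟨hj, le_rfl⟩) (fun x hx => (mem_filter.mp hx).2)
    (hM j hj)).union hR ?_ ?_
  · exact disjoint_insert_filter_le_filter_lt hM
  · intro x hx y hy z hz hyx hxz
    rcases mem_insert.mp hx with rfl | hx
    · exact lt_asymm hxz (hM z (mem_filter.mp hz).1)
    · exact lt_asymm hyx ((mem_filter.mp hx).2.trans_lt (mem_filter.mp hy).2)

theorem subset_or_subset_of_mem_block (hP : IsNCPartition (insert M t) P) (hM : ∀ x ∈ t, x < M)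
    {B : Finset α} (hB : B ∈ P) (hMB : M ∈ B) (hjB : j ∈ B) (hjmax : ∀ y ∈ B, y ≠ M → y ≤ j)
    {C : Finset α} (hC : C ∈ P) :
    C.erase M ⊆ t.filter (· ≤ j) ∨ C.erase M ⊆ t.filter (j < ·) := by
  have ht : ∀ y ∈ C.erase M, y ∈ t := fun y hy =>
    (mem_insert.mp (hP.subset C hC (mem_of_mem_erase hy))).resolve_left (ne_of_mem_erase hy)
  by_cases hCB : C = B
  · subst hCB
    exact Or.inl fun y hy =>
      mem_filter.mpr ⟨ht y hy, hjmax y (mem_of_mem_erase hy) (ne_of_mem_erase hy)⟩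
  by_cases hup : ∃ u ∈ C.erase M, j < u
  · obtain ⟨u, hu, hju⟩ := hup
    refine Or.inr fun y hy => mem_filter.mpr ⟨ht y hy, ?_⟩
    by_contra! hyj
    rcases hyj.lt_or_eq with hyj | rfl
    · exact hCB (hP.nonCrossing C hC B hB y (mem_of_mem_erase hy) j hjB u (mem_of_mem_erase hu)
        M hMB hyj hju (hM u (ht u hu)))
    · exact hCB (hP.eq_of_mem hC hB (mem_of_mem_erase hy) hjB)
  · push Not at hup
    exact Or.inl fun y hy => mem_filter.mpr ⟨ht y hy, hup y hy⟩

theorem block_glue (hQ : IsNCPartition (t.filter (· ≤ j)) Q)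
    (hR : IsNCPartition (t.filter (j < ·)) R) (hM : ∀ x ∈ t, x < M) {B : Finset α}
    (hB : B ∈ _root_.glue M j Q R) (hMB : M ∈ B) : j ∈ B ∧ ∀ y ∈ B, y ≠ M → y ≤ j := by
  have hMt : M ∉ t := fun h => lt_irrefl M (hM M h)
  rcases mem_union.mp hB with hB | hB
  · obtain ⟨C, hC, rfl⟩ := mem_image.mp hB
    rcases mem_insertIfMem.mp hMB with hMC | ⟨hjC, -⟩
    · exact absurd (mem_filter.mp (hQ.subset C hC hMC)).1 hMt
    refine ⟨mem_insertIfMem.mpr (Or.inl hjC), fun y hy hyM => ?_⟩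
    rcases mem_insertIfMem.mp hy with hyC | ⟨-, rfl⟩
    · exact (mem_filter.mp (hQ.subset C hC hyC)).2
    · exact absurd rfl hyM
  · exact absurd (mem_filter.mp (hR.subset B hB hMB)).1 hMt

theorem image_erase_glue (hQ : IsNCPartition (t.filter (· ≤ j)) Q)
    (hR : IsNCPartition (t.filter (j < ·)) R) (hM : ∀ x ∈ t, x < M) :
    (_root_.glue M j Q R).image (·.erase M) = Q ∪ R := by
  unfold _root_.glue
  have hMt : ∀ B ⊆ t, M ∉ B := fun B hB h => lt_irrefl M (hM M (hB h))
  rw [image_union, image_erase_addToBlock fun B hB =>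
    hMt B ((hQ.subset B hB).trans (filter_subset _ t))]
  congr 1
  exact (image_congr fun B hB =>
    erase_eq_of_notMem (hMt B ((hR.subset B hB).trans (filter_subset _ t)))).trans image_id'

theorem card_glue (hQ : IsNCPartition (t.filter (· ≤ j)) Q)
    (hR : IsNCPartition (t.filter (j < ·)) R) (hj : j ∈ t) (hM : ∀ x ∈ t, x < M) :
    (_root_.glue M j Q R).card = Q.card + R.card := by
  unfold _root_.glue
  have hQ' := hQ.addToBlock (mem_filter.mpr ⟨hj, le_rfl⟩) (fun x hx => (mem_filter.mp hx).2)
    (hM j hj)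
  rw [card_union_of_disjoint (hQ'.disjoint hR (disjoint_insert_filter_le_filter_lt hM)),
    card_addToBlock fun B hB h => lt_irrefl M (hM M (mem_filter.mp (hQ.subset B hB h)).1)]

theorem singleton_notMem_glue (hQ : IsNCPartition (t.filter (· ≤ j)) Q)
    (hR : IsNCPartition (t.filter (j < ·)) R) (hj : j ∈ t) (hM : ∀ x ∈ t, x < M) :
    {M} ∉ _root_.glue M j Q R := fun h =>
  (hM j hj).ne (mem_singleton.mp (hQ.block_glue hR hM h (mem_singleton_self M)).1)

theorem exists_glue_eq (hP : IsNCPartition (insert M t) P) (hMP : {M} ∉ P) (hM : ∀ x ∈ t, x < M) :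
    ∃ j ∈ t, ∃ Q R, IsNCPartition (t.filter (· ≤ j)) Q ∧ IsNCPartition (t.filter (j < ·)) R ∧
      _root_.glue M j Q R = P := by
  obtain ⟨B, hB, hMB⟩ := hP.exists_mem M (mem_insert_self M t)
  have hne := hP.erase_nonempty hMP hB
  have hjB : (B.erase M).max' hne ∈ B.erase M := max'_mem _ _
  set j := (B.erase M).max' hne
  have hjmax : ∀ y ∈ B, y ≠ M → y ≤ j := fun y hy hyM => le_max' _ y (mem_erase.mpr ⟨hyM, hy⟩)
  have hjt : j ∈ t := (mem_insert.mp (hP.subset B hB (mem_of_mem_erase hjB))).resolve_left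
    (ne_of_mem_erase hjB)
  have hP' := hP.image_erase hMP
  rw [erase_insert fun h => lt_irrefl M (hM M h)] at hP'
  have hsplit : ∀ C ∈ P.image (·.erase M), C ⊆ t.filter (· ≤ j) ∨ C ⊆ t.filter (j < ·) := by
    simp only [forall_mem_image]
    exact fun C hC => hP.subset_or_subset_of_mem_block hM hB hMB (mem_of_mem_erase hjB) hjmax hC
  have hd := disjoint_filter_le_filter_lt (t := t) (j := j)
  have hjR : _root_.addToBlock M j ((P.image (·.erase M)).filter (· ⊆ t.filter (j < ·))) =
      (P.image (·.erase M)).filter (· ⊆ t.filter (j < ·)) :=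
    addToBlock_eq_self fun C hC hjC => lt_irrefl j (mem_filter.mp ((mem_filter.mp hC).2 hjC)).2
  refine ⟨j, hjt, _, _,
    hP'.restrict (filter_subset _ t) fun C hC => (hsplit C hC).imp_right hd.symm.mono_left,
    hP'.restrict (filter_subset _ t) fun C hC => (hsplit C hC).symm.imp_right hd.mono_left, ?_⟩
  rw [_root_.glue, ← hjR, ← addToBlock_union, ← filter_or, filter_true_of_mem hsplit,
    hP.addToBlock_image_erase hB hMB (mem_of_mem_erase hjB) (ne_of_mem_erase hjB)]

end IsNCPartition

theorem glue_inj {t : Finset α} {M j₁ j₂ : α} {Q₁ R₁ Q₂ R₂ : Finset (Finset α)}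
    (hM : ∀ x ∈ t, x < M) (hj₁ : j₁ ∈ t) (hQ₁ : IsNCPartition (t.filter (· ≤ j₁)) Q₁)
    (hR₁ : IsNCPartition (t.filter (j₁ < ·)) R₁) (hj₂ : j₂ ∈ t)
    (hQ₂ : IsNCPartition (t.filter (· ≤ j₂)) Q₂) (hR₂ : IsNCPartition (t.filter (j₂ < ·)) R₂)
    (h : glue M j₁ Q₁ R₁ = glue M j₂ Q₂ R₂) : j₁ = j₂ ∧ Q₁ = Q₂ ∧ R₁ = R₂ := by
  obtain ⟨B, hB, hMB⟩ := (hQ₁.glue hR₁ hj₁ hM).exists_mem M (mem_insert_self M t)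
  obtain ⟨hj₁B, hle₁⟩ := hQ₁.block_glue hR₁ hM hB hMB
  obtain ⟨hj₂B, hle₂⟩ := hQ₂.block_glue hR₂ hM (h ▸ hB) hMB
  obtain rfl : j₁ = j₂ := le_antisymm (hle₂ j₁ hj₁B (hM j₁ hj₁).ne) (hle₁ j₂ hj₂B (hM j₂ hj₂).ne)
  have hQR := congrArg (·.image (·.erase M)) h
  rw [hQ₁.image_erase_glue hR₁ hM, hQ₂.image_erase_glue hR₂ hM] at hQR
  have hd := disjoint_filter_le_filter_lt (t := t) (j := j₁)
  refine ⟨rfl, ?_, ?_⟩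
  · rw [← hQ₁.filter_union_left hR₁ hd, hQR, hQ₂.filter_union_left hR₂ hd]
  · rw [← hQ₁.filter_union_right hR₁ hd, hQR, hQ₂.filter_union_right hR₂ hd]

variable {S : Type*} [CommSemiring S]

noncomputable def ncPartitionSum (c : S) (s : Finset α) : S :=
  ∑ P ∈ ncPartitions s, c ^ P.card

theorem sum_ncPartitions_singleton_mem (c : S) {t : Finset α} {M : α} (hM : M ∉ t) :
    ∑ P ∈ (ncPartitions (insert M t)).filter ({M} ∈ ·), c ^ P.card = c * ncPartitionSum c t := by
  rw [ncPartitionSum, mul_sum]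
  refine sum_nbij' (·.erase {M}) (insert {M}) (fun P hP => ?_) (fun Q hQ => ?_)
    (fun P hP => insert_erase (mem_filter.mp hP).2) (fun Q hQ => erase_insert fun h => ?_)
    (fun P hP => ?_)
  · obtain ⟨hP, hMP⟩ := mem_filter.mp hP
    have := (mem_ncPartitions.mp hP).erase_singleton hMP
    rwa [erase_insert hM, ← mem_ncPartitions] at this
  · exact mem_filter.mpr
      ⟨mem_ncPartitions.mpr ((mem_ncPartitions.mp hQ).insert_singleton hM), mem_insert_self _ _⟩
  · exact hM ((mem_ncPartitions.mp hQ).subset _ h (mem_singleton_self M))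
  · rw [← pow_succ', card_erase_add_one (mem_filter.mp hP).2]

theorem sum_ncPartitions_singleton_notMem (c : S) {t : Finset α} {M : α} (hM : ∀ x ∈ t, x < M) :
    ∑ P ∈ (ncPartitions (insert M t)).filter ({M} ∉ ·), c ^ P.card =
      ∑ j ∈ t, ncPartitionSum c (t.filter (· ≤ j)) * ncPartitionSum c (t.filter (j < ·)) := by
  simp_rw [ncPartitionSum, sum_mul_sum, ← sum_product', ← pow_add]
  rw [sum_sigma']
  symm
  have hmem : ∀ {y : (_ : α) × Finset (Finset α) × Finset (Finset α)},
      y ∈ t.sigma (fun j => ncPartitions (t.filter (· ≤ j)) ×ˢ ncPartitions (t.filter (j < ·))) ↔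
        y.1 ∈ t ∧ IsNCPartition (t.filter (· ≤ y.1)) y.2.1 ∧
          IsNCPartition (t.filter (y.1 < ·)) y.2.2 := by
    simp only [mem_sigma, mem_product, mem_ncPartitions, implies_true]
  refine sum_nbij (fun y => glue M y.1 y.2.1 y.2.2) (fun y hy => ?_) (fun y₁ h₁ y₂ h₂ h => ?_)
    (fun P hP => ?_) fun y hy => ?_
  · obtain ⟨hj, hQ, hR⟩ := hmem.mp hy
    exact mem_filter.mpr
      ⟨mem_ncPartitions.mpr (hQ.glue hR hj hM), hQ.singleton_notMem_glue hR hj hM⟩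
  · obtain ⟨hj₁, hQ₁, hR₁⟩ := hmem.mp h₁
    obtain ⟨hj₂, hQ₂, hR₂⟩ := hmem.mp h₂
    obtain ⟨h₁, h₂, h₃⟩ := glue_inj hM hj₁ hQ₁ hR₁ hj₂ hQ₂ hR₂ h
    exact Sigma.ext h₁ (heq_of_eq (Prod.ext h₂ h₃))
  · obtain ⟨hP, hMP⟩ := mem_filter.mp hP
    obtain ⟨j, hj, Q, R, hQ, hR, rfl⟩ := (mem_ncPartitions.mp hP).exists_glue_eq hMP hM
    exact ⟨⟨j, Q, R⟩, hmem.mpr ⟨hj, hQ, hR⟩, rfl⟩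
  · obtain ⟨hj, hQ, hR⟩ := hmem.mp hy
    exact congrArg (c ^ ·) (hQ.card_glue hR hj hM).symm

theorem sum_card_filter_le {M : Type*} [AddCommMonoid M] (t : Finset α) (f : ℕ → M) :
    ∑ j ∈ t, f (t.filter (· ≤ j)).card = ∑ i ∈ range t.card, f (i + 1) := by
  induction t using Finset.induction_on_max with
  | empty => simp
  | insert a s ha ih =>
    have has : a ∉ s := fun h => lt_irrefl a (ha a h)
    rw [sum_insert has, card_insert_of_notMem has, sum_range_succ, add_comm, ← ih,
      filter_true_of_mem fun x hx => (mem_insert.mp hx).elim le_of_eq fun hx => (ha x hx).le,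
      card_insert_of_notMem has]
    congr 1
    refine sum_congr rfl fun j hj => ?_
    rw [filter_insert, if_neg (ha j hj).not_ge]

theorem card_filter_lt (t : Finset α) (j : α) :
    (t.filter (j < ·)).card = t.card - (t.filter (· ≤ j)).card := by
  rw [← card_filter_add_card_filter_not (s := t) (· ≤ j)]
  simp only [not_le, add_tsub_cancel_left]

theorem ncPartitionSum_eq_freePoissonMoment (c : S) (s : Finset α) :
    ncPartitionSum c s = freePoissonMoment c s.card := by
  induction s using Finset.strongInduction with
  | H s ih =>
  rcases s.eq_empty_or_nonempty with rfl | hs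
  · simp [ncPartitionSum, ncPartitions_empty, freePoissonMoment]
  set M := s.max' hs
  set t := s.erase M
  have hM : ∀ x ∈ t, x < M := fun x hx => s.lt_max'_of_mem_erase_max' hs hx
  have hts : t ⊂ s := erase_ssubset (max'_mem s hs)
  have hst : s = insert M t := (insert_erase (max'_mem s hs)).symm
  calc ncPartitionSum c s
      = c * ncPartitionSum c t + ∑ j ∈ t,
          ncPartitionSum c (t.filter (· ≤ j)) * ncPartitionSum c (t.filter (j < ·)) := by
        rw [ncPartitionSum, hst, ← sum_filter_add_sum_filter_not _ ({M} ∈ ·),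
          sum_ncPartitions_singleton_mem c fun h => lt_irrefl M (hM M h),
          sum_ncPartitions_singleton_notMem c hM]
    _ = c * freePoissonMoment c t.card + ∑ j ∈ t, freePoissonMoment c (t.filter (· ≤ j)).card *
          freePoissonMoment c (t.card - (t.filter (· ≤ j)).card) := by
        rw [ih t hts]
        refine congrArg _ (sum_congr rfl fun j _ => ?_)
        rw [ih _ ((filter_subset _ t).trans_ssubset hts),
          ih _ ((filter_subset _ t).trans_ssubset hts), card_filter_lt]
    _ = freePoissonMoment c s.card := by
        rw [sum_card_filter_le t fun k => freePoissonMoment c k * freePoissonMoment c (t.card - k),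
          ← freePoissonMoment_succ, card_erase_add_one (max'_mem s hs)]

end NCPartition

theorem NC_eq_ncPartitions_univ (n : ℕ) : NC n = ncPartitions (univ : Finset (Fin n)) := by
  classical
  ext P
  rw [mem_ncPartitions, NC, mem_filter, and_iff_right (mem_univ P)]
  constructor
  · rintro ⟨⟨hne, hex⟩, hnc⟩
    exact ⟨fun B _ => subset_univ B, hne, fun x _ => (hex x).exists,
      fun h₁ h₂ hx₁ hx₂ => (hex _).unique ⟨h₁, hx₁⟩ ⟨h₂, hx₂⟩, hnc⟩
  · intro hP
    refine ⟨⟨hP.nonempty, fun x => ?_⟩, hP.nonCrossing⟩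
    obtain ⟨B, hB, hxB⟩ := hP.exists_mem x (mem_univ x)
    exact ⟨B, ⟨hB, hxB⟩, fun C hC => hP.eq_of_mem hC.1 hB hC.2 hxB⟩

/-- The n-th moment of the Marchenko–Pastur distribution with parameter `c > 0`
equals `∑_{π ∈ NC(n)} c^{#(π)}`. -/
theorem stmt_12 (c : ℝ) (hc : 0 < c) (n : ℕ) (hn : 1 ≤ n) :
    (∫ x in ((1 - Real.sqrt c) ^ 2)..((1 + Real.sqrt c) ^ 2),
        x ^ n * Real.sqrt (((1 + Real.sqrt c) ^ 2 - x) * (x - (1 - Real.sqrt c) ^ 2))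
          / (2 * Real.pi * x))
      = ∑ P ∈ NC n, c ^ P.card := by
  obtain ⟨n, rfl⟩ := Nat.exists_eq_add_of_le' hn
  rw [integral_marchenkoPastur_moment hc.le, NC_eq_ncPartitions_univ, ← ncPartitionSum,
    ncPartitionSum_eq_freePoissonMoment, card_univ, Fintype.card_fin,
    freePoissonMoment_succ_eq_motzkinPoly (by positivity)]
end

section
/- For permutations π, σ of [n] such that the subgroup ⟨π, σ⟩ acts transitively on [n], there exists an integer g ≥ 0 with #(π) + #(σπ^{-1}) + #(σ) = n + 2(1 - g), where #(·) denotes the number of cycles. -/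
/-!
Factor `σ * π⁻¹` and `π` into `n - #(σ * π⁻¹)` and `n - #π` transpositions; the concatenated
list has product `σ`. Multiplying a permutation by a transposition raises its cycle count by at
most one, and if the transposition joins two orbits of the group generated so far it joins two
cycles and lowers the cycle count. Hence for any list `L` of transpositions
`#(∏ L) + n ≤ |L| + 2 · #orbits⟨L⟩`, which for our list and a transitive `⟨π, σ⟩` reads
`#π + #(σ * π⁻¹) + #σ ≤ n + 2`. Parity comes from `sign τ = (-1) ^ (n - #τ)`.
-/

/-- The number of cycles of a permutation (counting fixed points), i.e. the
number of orbits of the cyclic group it generates. -/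
noncomputable def cycleCount {α : Type*} [Fintype α] (π : Equiv.Perm α) : ℕ :=
  Nat.card (MulAction.orbitRel.Quotient (Subgroup.zpowers π) α)

namespace Setoid

variable {α : Type*}

def glue (r : Setoid α) (a b : α) : Setoid α where
  r x y := r x y ∨ (r x a ∧ r b y) ∨ (r x b ∧ r a y)
  iseqv := by
    refine ⟨fun x => .inl (r.refl' x), ?_, ?_⟩
    · rintro x y (h | ⟨h₁, h₂⟩ | ⟨h₁, h₂⟩)
      exacts [.inl (r.symm' h), .inr (.inr ⟨r.symm' h₂, r.symm' h₁⟩),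
        .inr (.inl ⟨r.symm' h₂, r.symm' h₁⟩)]
    · rintro x y z (_ | _ | _) (_ | _ | _) <;> grind [Setoid.trans', Setoid.symm']

lemma le_glue (r : Setoid α) (a b : α) : r ≤ r.glue a b := fun _ _ h => .inl h

lemma glue_rel (r : Setoid α) (a b : α) : r.glue a b a b := .inr (.inl ⟨r.refl' a, r.refl' b⟩)

lemma map_of_le_surjective {r s : Setoid α} (h : r ≤ s) : Function.Surjective (map_of_le h) :=
  Quotient.ind fun x => ⟨Quotient.mk _ x, rfl⟩

variable [Finite α]

lemma card_quotient_le_card (r : Setoid α) : Nat.card (Quotient r) ≤ Nat.card α :=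
  Nat.card_le_card_of_surjective _ Quotient.mk_surjective

lemma card_quotient_le_of_le {r s : Setoid α} (h : r ≤ s) :
    Nat.card (Quotient s) ≤ Nat.card (Quotient r) :=
  Nat.card_le_card_of_surjective _ (map_of_le_surjective h)

lemma card_quotient_lt_of_le {r s : Setoid α} (h : r ≤ s) {a b : α} (hr : ¬ r a b)
    (hs : s a b) : Nat.card (Quotient s) < Nat.card (Quotient r) := by
  refine lt_of_le_of_ne (card_quotient_le_of_le h) fun heq => hr ?_
  have hinj := ((map_of_le_surjective h).bijective_of_nat_card_le heq.ge).injective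
  exact Quotient.exact (hinj (Quotient.sound hs : (⟦a⟧ : Quotient s) = ⟦b⟧))

lemma card_quotient_le_card_quotient_glue_add_one (r : Setoid α) (a b : α) :
    Nat.card (Quotient r) ≤ Nat.card (Quotient (r.glue a b)) + 1 := by
  -- only the class of `b` gets merged into another one
  have hinj : Set.InjOn (map_of_le (r.le_glue a b)) {⟦b⟧}ᶜ := by
    rintro ⟨x⟩ hx ⟨y⟩ hy hxy
    rcases Quotient.exact hxy with h | ⟨-, h⟩ | ⟨h, -⟩
    · exact Quotient.sound h
    · exact absurd (Quotient.sound (r.symm' h)) hy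
    · exact absurd (Quotient.sound h) hx
  have := Set.ncard_le_ncard_of_injOn _ (fun _ _ => Set.mem_univ _) hinj
  rw [Set.ncard_univ, Set.compl_eq_univ_sdiff] at this
  rw [← Set.ncard_univ, ← Set.ncard_sdiff_singleton_add_one (Set.mem_univ ⟦b⟧)]
  omega

end Setoid

namespace Equiv.Perm

open MulAction Subgroup

variable {α : Type*}

lemma orbitRel_apply_self {G : Subgroup (Perm α)} {g : Perm α} (hg : g ∈ G) (x : α) :
    orbitRel G α x (g x) :=
  ⟨⟨g, hg⟩⁻¹, by simp [Subgroup.smul_def]⟩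

lemma orbitRel_closure_le {S : Set (Perm α)} {s : Setoid α} (h : ∀ g ∈ S, ∀ x, s x (g x)) :
    orbitRel (closure S) α ≤ s := by
  rintro _ y ⟨⟨g, hg⟩, rfl⟩
  refine s.symm' (closure_induction (p := fun g _ => ∀ x, s x (g x)) h (fun x => s.refl' x)
    (fun u v _ _ hu hv x => s.trans' (hv x) (hu (v x))) (fun u _ hu x => ?_) hg y)
  simpa using s.symm' (hu (u⁻¹ x))

lemma orbitRel_closure_insert_le {S : Set (Perm α)} {s : Setoid α} {g : Perm α}
    (hS : orbitRel (closure S) α ≤ s) (hg : ∀ x, s x (g x)) :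
    orbitRel (closure (insert g S)) α ≤ s :=
  orbitRel_closure_le <| Set.forall_mem_insert.2
    ⟨hg, fun _ hh x => hS (orbitRel_apply_self (subset_closure hh) x)⟩

lemma orbitRel_mono {G H : Subgroup (Perm α)} (h : G ≤ H) : orbitRel G α ≤ orbitRel H α := by
  have := orbitRel_closure_le (S := G) fun g hg x => orbitRel_apply_self (h hg) x
  rwa [closure_eq] at this

lemma orbitRel_zpowers (τ : Perm α) : orbitRel (zpowers τ) α = SameCycle.setoid τ := by
  ext x y
  change _ ↔ SameCycle τ x y
  simp only [orbitRel_apply, mem_orbit_iff, Subtype.exists, mem_zpowers_iff, Subgroup.mk_smul,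
    Perm.smul_def, exists_prop, exists_exists_eq_and]
  exact sameCycle_comm

lemma card_orbitRel_quotient_bot :
    Nat.card (orbitRel.Quotient (⊥ : Subgroup (Perm α)) α) = Nat.card α := by
  have : orbitRel (⊥ : Subgroup (Perm α)) α = ⊥ := by
    ext x y
    simp [orbitRel_apply, mem_orbit_iff, Subgroup.smul_def, eq_comm]
  rw [orbitRel.Quotient, this]
  exact Nat.card_congr Setoid.quotientBotEquiv

lemma sameCycle_setoid_le {τ : Perm α} {s : Setoid α} (h : ∀ x, s x (τ x)) :
    SameCycle.setoid τ ≤ s := by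
  rw [← orbitRel_zpowers, zpowers_eq_closure]
  exact orbitRel_closure_le (by simpa using h)

lemma sameCycle_setoid_le_orbitRel {G : Subgroup (Perm α)} {τ : Perm α} (hτ : τ ∈ G) :
    SameCycle.setoid τ ≤ orbitRel G α :=
  sameCycle_setoid_le (orbitRel_apply_self hτ)

lemma SameCycle.induction_on [Finite α] {f : Perm α} {p : α → Prop} {x y : α}
    (h : f.SameCycle x y) (hx : p x) (hf : ∀ z, p z → p (f z)) : p y := by
  obtain ⟨k, rfl⟩ := h.exists_nat_pow_eq
  clear h
  induction k with
  | zero => exact hx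
  | succ k ih => simpa [pow_succ'] using hf _ ih

section swap

variable [DecidableEq α]

lemma rel_swap_apply {s : Setoid α} {a b : α} (hab : s a b) (x : α) : s x (swap a b x) := by
  rcases eq_or_ne x a with rfl | hxa
  · simpa using hab
  rcases eq_or_ne x b with rfl | hxb
  · simpa using s.symm' hab
  · simp [swap_apply_of_ne_of_ne hxa hxb]

lemma sameCycle_setoid_mul_swap_le {τ : Perm α} {s : Setoid α} (hτ : SameCycle.setoid τ ≤ s)
    {a b : α} (hab : s a b) : SameCycle.setoid (τ * swap a b) ≤ s :=
  sameCycle_setoid_le fun x => s.trans' (rel_swap_apply hab x) (hτ ⟨1, by simp⟩)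

/-- Walking backwards along `τ` from `τ a` until `a`, one never meets `b`, so
`τ * swap a b` takes the same steps. -/
lemma sameCycle_mul_swap_of_not_sameCycle [Finite α] {τ : Perm α} {a b : α}
    (h : ¬ τ.SameCycle a b) : (τ * swap a b).SameCycle a b := by
  have hτa : τ.SameCycle a (τ a) := sameCycle_apply_right.2 .rfl
  suffices (τ * swap a b).SameCycle a (τ a) by
    simpa [← sameCycle_apply_right (f := τ * swap a b) (y := b)] using this
  refine SameCycle.induction_on (p := fun y => τ.SameCycle a y → (τ * swap a b).SameCycle a y)
    (sameCycle_inv.2 hτa) (fun _ => .rfl) ?_ hτa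
  intro y hy hay
  have hya := hy (sameCycle_symm_apply_right.1 hay)
  rcases eq_or_ne (τ⁻¹ y) a with hya' | hya'
  · rw [hya']
  have hyb : τ⁻¹ y ≠ b := fun hyb => h (hyb ▸ hay)
  have hfix : (τ * swap a b) (τ⁻¹ y) = y := by
    rw [mul_apply, swap_apply_of_ne_of_ne hya' hyb, ← mul_apply, mul_inv_cancel, one_apply]
  rwa [← sameCycle_apply_right, hfix]

end swap

variable [Fintype α]

lemma cycleCount_eq_card_quotient (τ : Perm α) :
    cycleCount τ = Nat.card (Quotient (SameCycle.setoid τ)) := by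
  rw [cycleCount, ← orbitRel_zpowers]

lemma cycleCount_one : cycleCount (1 : Perm α) = Nat.card α := by
  rw [cycleCount, zpowers_one_eq_bot, card_orbitRel_quotient_bot]

lemma cycleCount_le_card (τ : Perm α) : cycleCount τ ≤ Nat.card α :=
  Setoid.card_quotient_le_card _

variable [DecidableEq α]

lemma cycleCount_mul_swap_le (τ : Perm α) (a b : α) :
    cycleCount (τ * swap a b) ≤ cycleCount τ + 1 := by
  set r := SameCycle.setoid (τ * swap a b)
  have hle : SameCycle.setoid τ ≤ r.glue a b := by
    simpa [mul_assoc] using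
      sameCycle_setoid_mul_swap_le (r.le_glue a b) (r.glue_rel a b) (τ := τ * swap a b)
  rw [cycleCount_eq_card_quotient, cycleCount_eq_card_quotient]
  exact (r.card_quotient_le_card_quotient_glue_add_one a b).trans
    (Nat.add_le_add_right (Setoid.card_quotient_le_of_le hle) 1)

lemma cycleCount_mul_swap_lt {τ : Perm α} {a b : α} (h : ¬ τ.SameCycle a b) :
    cycleCount (τ * swap a b) < cycleCount τ := by
  have hab := sameCycle_mul_swap_of_not_sameCycle h
  have hle : SameCycle.setoid τ ≤ SameCycle.setoid (τ * swap a b) := by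
    simpa [mul_assoc] using sameCycle_setoid_mul_swap_le le_rfl hab (τ := τ * swap a b)
  rw [cycleCount_eq_card_quotient, cycleCount_eq_card_quotient]
  exact Setoid.card_quotient_lt_of_le hle h hab

/-- `τ * swap a (τ a)` fixes `τ a`, cutting it out of the cycle of `a`. -/
lemma cycleCount_lt_mul_swap_apply {τ : Perm α} {a : α} (ha : τ a ≠ a) :
    cycleCount τ < cycleCount (τ * swap a (τ a)) := by
  have hτa : τ.SameCycle a (τ a) := sameCycle_apply_right.2 .rfl
  have hle := sameCycle_setoid_mul_swap_le le_rfl hτa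
  have hfix : (τ * swap a (τ a)) (τ a) = τ a := by simp
  rw [cycleCount_eq_card_quotient, cycleCount_eq_card_quotient]
  exact Setoid.card_quotient_lt_of_le hle (fun h => ha (h.eq_of_right hfix).symm) hτa

theorem exists_swap_list (τ : Perm α) :
    ∃ L : List (Perm α), (∀ g ∈ L, g.IsSwap) ∧ L.prod = τ ∧
      L.length + cycleCount τ = Nat.card α := by
  by_cases hτ : τ = 1
  · exact ⟨[], by simp, by simp [hτ], by simp [hτ, cycleCount_one]⟩
  obtain ⟨a, ha⟩ : ∃ a, τ a ≠ a := not_forall.1 fun h => hτ (Equiv.ext h)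
  have hsplit : cycleCount (τ * swap a (τ a)) = cycleCount τ + 1 :=
    le_antisymm (cycleCount_mul_swap_le _ _ _) (cycleCount_lt_mul_swap_apply ha)
  obtain ⟨L, hL, hprod, hlen⟩ := exists_swap_list (τ * swap a (τ a))
  refine ⟨L ++ [swap a (τ a)], ?_, by simp [hprod, mul_assoc], ?_⟩
  · simp only [List.mem_append, List.mem_singleton]
    rintro g (hg | rfl)
    exacts [hL g hg, ⟨a, τ a, ha.symm, rfl⟩]
  · rw [List.length_append, List.length_singleton]
    omega
termination_by Nat.card α - cycleCount τ
decreasing_by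
  have := cycleCount_le_card (τ * swap a (τ a))
  omega

lemma sign_eq_neg_one_pow_card_sub_cycleCount (τ : Perm α) :
    sign τ = (-1) ^ (Nat.card α - cycleCount τ) := by
  obtain ⟨L, hL, rfl, hlen⟩ := exists_swap_list τ
  rw [sign_prod_list_swap hL, ← hlen, Nat.add_sub_cancel]

lemma cycleCount_list_prod_add_card_le (L : List (Perm α)) (hL : ∀ g ∈ L, g.IsSwap) :
    cycleCount L.prod + Nat.card α ≤
      L.length + 2 * Nat.card (orbitRel.Quotient (closure {g | g ∈ L}) α) := by
  induction L using List.reverseRecOn with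
  | nil =>
    have : {g | g ∈ ([] : List (Perm α))} = ∅ := Set.eq_empty_of_forall_notMem (by simp)
    rw [this, Subgroup.closure_empty, card_orbitRel_quotient_bot, List.prod_nil, cycleCount_one,
      List.length_nil]
    omega
  | append_singleton L t ih =>
    obtain ⟨a, b, -, rfl⟩ := hL t (by simp)
    specialize ih fun g hg => hL g (by simp [hg])
    simp only [orbitRel.Quotient] at ih ⊢
    set O := orbitRel (closure {g | g ∈ L}) α
    have hgen {s : Setoid α} (hO : O ≤ s) (hab : s a b) :
        orbitRel (closure {g | g ∈ L ++ [swap a b]}) α ≤ s := by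
      have : {g | g ∈ L ++ [swap a b]} = insert (swap a b) {g | g ∈ L} := by
        ext; simp [or_comm]
      exact this ▸ orbitRel_closure_insert_le hO (rel_swap_apply hab)
    have hτ : SameCycle.setoid L.prod ≤ O :=
      sameCycle_setoid_le_orbitRel (list_prod_mem fun g hg => subset_closure hg)
    rw [List.prod_append, List.prod_singleton, List.length_append, List.length_singleton]
    by_cases hab : O a b
    · have h₁ := cycleCount_mul_swap_le L.prod a b
      have h₂ := Setoid.card_quotient_le_of_le (hgen le_rfl hab)
      omega
    · have h₁ := cycleCount_mul_swap_lt fun h => hab (hτ h)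
      have h₂ := O.card_quotient_le_card_quotient_glue_add_one a b
      have h₃ := Setoid.card_quotient_le_of_le (hgen (O.le_glue a b) (O.glue_rel a b))
      omega

theorem cycleCount_add_cycleCount_mul_inv_add_cycleCount_le (π σ : Perm α) :
    cycleCount π + cycleCount (σ * π⁻¹) + cycleCount σ ≤
      Nat.card α + 2 * Nat.card (orbitRel.Quotient (closure {π, σ}) α) := by
  obtain ⟨L₁, hL₁, hprod₁, hlen₁⟩ := exists_swap_list (σ * π⁻¹)
  obtain ⟨L₂, hL₂, hprod₂, hlen₂⟩ := exists_swap_list π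
  have hprod : (L₁ ++ L₂).prod = σ := by simp [hprod₁, hprod₂]
  have hbound := cycleCount_list_prod_add_card_le (L₁ ++ L₂)
    (by simpa [or_imp, forall_and] using ⟨hL₁, hL₂⟩)
  have hmem {L : List (Perm α)} (h : L ⊆ L₁ ++ L₂) : L.prod ∈ closure {g | g ∈ L₁ ++ L₂} :=
    list_prod_mem fun g hg => subset_closure (h hg)
  have horbits : Nat.card (orbitRel.Quotient (closure {g | g ∈ L₁ ++ L₂}) α) ≤
      Nat.card (orbitRel.Quotient (closure {π, σ}) α) :=
    Setoid.card_quotient_le_of_le <| orbitRel_mono <| (closure_le _).2 <| Set.insert_subset_iff.2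
      ⟨hprod₂ ▸ hmem (by simp), by simpa [hprod] using hmem (L := L₁ ++ L₂) (by simp)⟩
  rw [hprod, List.length_append] at hbound
  omega

theorem even_card_add_cycleCount_add_cycleCount_mul_inv_add_cycleCount (π σ : Perm α) :
    Even (Nat.card α + cycleCount π + cycleCount (σ * π⁻¹) + cycleCount σ) := by
  have h : sign (σ * π⁻¹) * sign π * sign σ = 1 := by
    rw [← map_mul, inv_mul_cancel_right, Int.units_mul_self]
  rw [sign_eq_neg_one_pow_card_sub_cycleCount, sign_eq_neg_one_pow_card_sub_cycleCount,
    sign_eq_neg_one_pow_card_sub_cycleCount, ← pow_add, ← pow_add,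
    neg_one_pow_eq_one_iff_even (by decide)] at h
  have := cycleCount_le_card π
  have := cycleCount_le_card σ
  have := cycleCount_le_card (σ * π⁻¹)
  obtain ⟨r, hr⟩ := h
  exact ⟨2 * Nat.card α - r, by omega⟩

end Equiv.Perm

/-- Euler's formula: if `⟨π, σ⟩` acts transitively on `[n]`, then
`#(π) + #(σπ⁻¹) + #(σ) = n + 2(1 - g)` for some integer `g ≥ 0`. -/
theorem stmt_15 (n : ℕ) (π σ : Equiv.Perm (Fin n))
    (htrans : ∀ x y : Fin n,
      ∃ τ ∈ Subgroup.closure ({π, σ} : Set (Equiv.Perm (Fin n))), τ x = y) :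
    ∃ g : ℕ, (cycleCount π + cycleCount (σ * π⁻¹) + cycleCount σ : ℤ)
      = n + 2 * (1 - (g : ℤ)) := by
  have horbits : Nat.card (MulAction.orbitRel.Quotient
      (Subgroup.closure ({π, σ} : Set (Equiv.Perm (Fin n)))) (Fin n)) ≤ 1 := by
    refine Finite.card_le_one_iff_subsingleton.2 ⟨?_⟩
    rintro ⟨x⟩ ⟨y⟩
    obtain ⟨τ, hτ, rfl⟩ := htrans x y
    exact Quotient.sound (Equiv.Perm.orbitRel_apply_self hτ x)
  have hle := Equiv.Perm.cycleCount_add_cycleCount_mul_inv_add_cycleCount_le π σ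
  obtain ⟨k, hk⟩ := Equiv.Perm.even_card_add_cycleCount_add_cycleCount_mul_inv_add_cycleCount π σ
  rw [Nat.card_fin] at hle hk
  exact ⟨n + 1 - k, by omega⟩
end

section
/- If p and q are pairings (fixed-point-free involutions) of a finite set, then 2·#(p ∨ q) = #(pq), where p ∨ q denotes the join of p and q as partitions and #(pq) is the number of cycles of the composite permutation. -/
/-- If `p` and `q` are pairings (fixed-point-free involutions) of a finite set,
then `2·#(p ∨ q) = #(pq)`, where `p ∨ q` is the join of the corresponding
partitions (i.e. the orbits of the group generated by `p` and `q`). -/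
theorem stmt_17 {α : Type*} [Fintype α] (p q : Equiv.Perm α)
    (hp : p * p = 1) (hp' : ∀ x, p x ≠ x)
    (hq : q * q = 1) (hq' : ∀ x, q x ≠ x) :
    2 * Nat.card (MulAction.orbitRel.Quotient
        (Subgroup.closure ({p, q} : Set (Equiv.Perm α))) α)
      = cycleCount (p * q) := by
  classical
  set G := Subgroup.closure ({p, q} : Set (Equiv.Perm α)) with hG
  set c := p * q with hc
  set H := Subgroup.zpowers c with hH
  have hpG : p ∈ G := Subgroup.subset_closure (by simp)
  have hqG : q ∈ G := Subgroup.subset_closure (by simp)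
  have hHG : H ≤ G := Subgroup.zpowers_le.mpr (mul_mem hpG hqG)
  -- basic relations
  have hpc : p * c = q := by rw [hc, ← mul_assoc, hp, one_mul]
  have hcinv : c⁻¹ = q * p := by
    rw [hc, mul_inv_rev, inv_eq_of_mul_eq_one_left hp, inv_eq_of_mul_eq_one_left hq]
  have hsc : SemiconjBy p c c⁻¹ := by
    show p * c = c⁻¹ * p
    rw [hpc, hcinv, mul_assoc, hp, mul_one]
  have hP : ∀ n : ℤ, p * c ^ n = c ^ (-n) * p := by
    intro n
    have := hsc.zpow_right n
    rwa [inv_zpow, ← zpow_neg] at this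
  have hP' : ∀ n : ℤ, c ^ n * p = p * c ^ (-n) := by
    intro n; rw [hP, neg_neg]
  have hPa : ∀ (n : ℤ) (x : α), p ((c ^ n) x) = (c ^ (-n)) (p x) := by
    intro n x
    have := congrArg (fun π : Equiv.Perm α => π x) (hP n)
    simpa using this
  have hca : ∀ (m n : ℤ) (x : α), (c ^ m) ((c ^ n) x) = (c ^ (m + n)) x := by
    intro m n x
    rw [zpow_add, Equiv.Perm.mul_apply]
  -- key lemma: no power of c maps x to p x
  have keyA : ∀ (x : α) (n : ℤ), (c ^ n) x ≠ p x := by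
    intro x n h
    rcases Int.even_or_odd n with ⟨k, hk⟩ | ⟨k, hk⟩
    · apply hp' ((c ^ k) x)
      rw [hPa, ← h, hca]
      have : -k + n = k := by omega
      rw [this]
    · apply hq' ((c ^ k) x)
      have h1 : q ((c ^ k) x) = p (c ((c ^ k) x)) := by
        rw [← hpc, Equiv.Perm.mul_apply]
      have h2 : c ((c ^ k) x) = (c ^ (1 + k)) x := by
        have := hca 1 k x
        simpa using this
      rw [h1, h2, hPa, ← h, hca]
      have : -(1 + k) + n = k := by omega
      rw [this]
  -- the dihedral subgroup
  have hPinv : ∀ n : ℤ, (p * c ^ n)⁻¹ = p * c ^ n := by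
    intro n
    rw [mul_inv_rev, inv_eq_of_mul_eq_one_left hp, ← zpow_neg, ← hP]
  let K : Subgroup (Equiv.Perm α) :=
    { carrier := {g | ∃ n : ℤ, g = c ^ n ∨ g = p * c ^ n}
      one_mem' := ⟨0, Or.inl (zpow_zero c).symm⟩
      mul_mem' := by
        rintro a b ⟨m, hm | hm⟩ ⟨n, hn | hn⟩ <;> subst hm <;> subst hn
        · exact ⟨m + n, Or.inl (zpow_add c m n).symm⟩
        · refine ⟨-m + n, Or.inr ?_⟩
          rw [← mul_assoc, hP' m, mul_assoc, ← zpow_add]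
        · refine ⟨m + n, Or.inr ?_⟩
          rw [mul_assoc, ← zpow_add]
        · refine ⟨-m + n, Or.inl ?_⟩
          calc (p * c ^ m) * (p * c ^ n) = p * ((c ^ m * p) * c ^ n) := by
                rw [mul_assoc, mul_assoc]
            _ = p * ((p * c ^ (-m)) * c ^ n) := by rw [hP']
            _ = (p * p) * (c ^ (-m) * c ^ n) := by
                rw [mul_assoc, ← mul_assoc, ← mul_assoc]
            _ = c ^ (-m + n) := by rw [hp, one_mul, ← zpow_add]
      inv_mem' := by
        rintro a ⟨n, h | h⟩ <;> subst h
        · exact ⟨-n, Or.inl (zpow_neg c n).symm⟩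
        · exact ⟨n, Or.inr (hPinv n)⟩ }
  have hGK : G ≤ K := by
    rw [hG]
    apply (Subgroup.closure_le K).mpr
    rintro g (rfl | rfl)
    · exact ⟨0, Or.inr (by rw [zpow_zero, mul_one])⟩
    · exact ⟨1, Or.inr (by rw [zpow_one, hpc])⟩
  -- orbit description
  have orbG : ∀ x y : α, (MulAction.orbitRel G α) y x →
      (∃ n : ℤ, y = (c ^ n) x) ∨ (∃ n : ℤ, y = (c ^ n) (p x)) := by
    intro x y hyx
    rw [MulAction.orbitRel_apply, MulAction.mem_orbit_iff] at hyx
    obtain ⟨g, hg⟩ := hyx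
    obtain ⟨n, hn | hn⟩ := hGK g.2
    · left
      exact ⟨n, by rw [← hg, Subgroup.smul_def, Equiv.Perm.smul_def, hn]⟩
    · right
      refine ⟨-n, ?_⟩
      rw [← hg, Subgroup.smul_def, Equiv.Perm.smul_def, hn, Equiv.Perm.mul_apply, hPa]
  -- the map between orbit quotients
  let f : MulAction.orbitRel.Quotient H α → MulAction.orbitRel.Quotient G α :=
    Quotient.map' id (by
      intro a b hab
      rw [MulAction.orbitRel_apply, MulAction.mem_orbit_iff] at hab
      obtain ⟨g, hg⟩ := hab
      rw [MulAction.orbitRel_apply, MulAction.mem_orbit_iff]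
      exact ⟨⟨(g : Equiv.Perm α), hHG g.2⟩, hg⟩)
  have hfmk : ∀ y : α, f (Quotient.mk'' y) = Quotient.mk'' y := by
    intro y
    exact Quotient.map'_mk'' id _ y
  -- each fiber of f has exactly two elements
  have hfiber : ∀ b : MulAction.orbitRel.Quotient G α, Nat.card {a // f a = b} = 2 := by
    intro b
    induction b using Quotient.inductionOn' with
    | h x =>
      set A : MulAction.orbitRel.Quotient H α := Quotient.mk'' x with hA
      set B : MulAction.orbitRel.Quotient H α := Quotient.mk'' (p x) with hB
      have hAB : A ≠ B := by
        intro h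
        rw [hA, hB, Quotient.eq''] at h
        have h' : x ∈ MulAction.orbit H (p x) := (MulAction.orbitRel_apply).mp h
        rw [MulAction.mem_orbit_iff] at h'
        obtain ⟨g, hg⟩ := h'
        obtain ⟨n, hn⟩ := g.2
        have hg' : (c ^ n) (p x) = x := by
          rw [Subgroup.smul_def, Equiv.Perm.smul_def, ← hn] at hg
          exact hg
        have h2 := congrArg (⇑(c ^ (-n))) hg'
        rw [hca] at h2
        simp only [neg_add_cancel, zpow_zero, Equiv.Perm.coe_one, id_eq] at h2
        exact keyA x (-n) h2.symm
      have hchar : ∀ a, f a = Quotient.mk'' x ↔ a = A ∨ a = B := by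
        intro a
        induction a using Quotient.inductionOn' with
        | h y =>
          constructor
          · intro h
            rw [hfmk, Quotient.eq''] at h
            rcases orbG x y h with ⟨n, hn⟩ | ⟨n, hn⟩
            · left
              rw [hA, Quotient.eq'', MulAction.orbitRel_apply, MulAction.mem_orbit_iff]
              exact ⟨⟨c ^ n, Subgroup.zpow_mem H (Subgroup.mem_zpowers c) n⟩, hn.symm⟩
            · right
              rw [hB, Quotient.eq'', MulAction.orbitRel_apply, MulAction.mem_orbit_iff]
              exact ⟨⟨c ^ n, Subgroup.zpow_mem H (Subgroup.mem_zpowers c) n⟩, hn.symm⟩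
          · rintro (h | h) <;> rw [h]
            · rw [hA, hfmk]
            · rw [hB, hfmk, Quotient.eq'', MulAction.orbitRel_apply,
                MulAction.mem_orbit_iff]
              exact ⟨⟨p, hpG⟩, rfl⟩
      have e : {a // f a = Quotient.mk'' x} ≃ ({A, B} : Set (MulAction.orbitRel.Quotient H α)) :=
        Equiv.subtypeEquivRight (by
          intro a
          rw [hchar]
          simp [Set.mem_insert_iff])
      rw [Nat.card_congr e, Nat.card_coe_set_eq, Set.ncard_pair hAB]
  -- counting
  haveI : Fintype (MulAction.orbitRel.Quotient G α) := Fintype.ofFinite _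
  haveI : Fintype (MulAction.orbitRel.Quotient H α) := Fintype.ofFinite _
  have hmain : Nat.card (MulAction.orbitRel.Quotient H α)
      = 2 * Nat.card (MulAction.orbitRel.Quotient G α) := by
    have e := (Equiv.sigmaFiberEquiv f).symm
    rw [Nat.card_congr e]
    rw [Nat.card_eq_fintype_card, Fintype.card_sigma]
    have : ∀ b, Fintype.card {a // f a = b} = 2 := by
      intro b
      rw [← Nat.card_eq_fintype_card, hfiber]
    simp only [this, Finset.sum_const, Finset.card_univ, smul_eq_mul]
    rw [Nat.card_eq_fintype_card, mul_comm]
  rw [cycleCount]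
  exact hmain.symm
end
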